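/- Let C be a context with n holes, ℓ a non-variable term, and suppose ℓ matches C|_p (i.e., there is a substitution σ with ℓσ = C|_p, treating holes as constants). Then there exists a term c such that (1) ℓ matches c|_p and C = cσ_□ for some substitution σ (where σ_□ maps every variable in the domain of σ to □ and is the identity elsewhere), and (2) for every context D with C ⊑ D and ℓ matching D|_p, c matches D. -/

import Mathlib

/-- First-order terms over signature `F` and variables `V`. -/
inductive Tm (F V : Type) : Type
  | var : V → Tm F V
  | app : F → List (Tm F V) → Tm F V

namespace Tm

variable {F V G : Type}

/-- Applying a substitution to a term. -/
def subst (σ : V → Tm F V) : Tm F V → Tm F V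
  | var x => σ x
  | app f ts => app f (ts.attach.map (fun ⟨t, _⟩ => subst σ t))
  decreasing_by · simp only [Tm.app.sizeOf_spec]; have := List.sizeOf_lt_of_mem ‹_›; omega

/-- List of (occurrences of) variables of a term. -/
def vars : Tm F V → List V
  | var x => [x]
  | app _ ts => ts.attach.flatMap (fun ⟨t, _⟩ => vars t)
  decreasing_by · simp only [Tm.app.sizeOf_spec]; have := List.sizeOf_lt_of_mem ‹_›; omega

/-- Renaming the function symbols of a term. -/
def mapF (g : F → G) : Tm F V → Tm G V
  | var x => var x
  | app f ts => app (g f) (ts.attach.map (fun ⟨t, _⟩ => mapF g t))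
  decreasing_by · simp only [Tm.app.sizeOf_spec]; have := List.sizeOf_lt_of_mem ‹_›; omega

/-- The subterm at a position (a list of argument indices), if the position exists. -/
def sub : List Nat → Tm F V → Option (Tm F V)
  | [], t => some t
  | _ :: _, var _ => none
  | i :: p, app _ ts => (ts[i]?).bind (sub p)

/-- Replacing the subterm at a position by another term. -/
def repl : List Nat → Tm F V → Tm F V → Tm F V
  | [], _, u => u
  | _ :: _, var x, _ => var x
  | i :: p, app f ts, u =>
      app f (match ts[i]? with
             | some t => ts.set i (repl p t u)
             | none => ts)

end Tm

/-- A rewrite rule: a pair of terms. -/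
structure Rule (F V : Type) where
  lhs : Tm F V
  rhs : Tm F V

/-- The usual variable conditions on a rewrite rule: the left-hand side is
not a variable and all variables of the right-hand side occur in the left-hand side. -/
def WfRule {F V : Type} (ρ : Rule F V) : Prop :=
  (∀ x, ρ.lhs ≠ .var x) ∧ ∀ x, x ∈ ρ.rhs.vars → x ∈ ρ.lhs.vars

/-- `s` rewrites to `t` at position `p` using rule `ρ`. -/
def StepAt {F V : Type} (p : List Nat) (ρ : Rule F V) (s t : Tm F V) : Prop :=
  ∃ σ : V → Tm F V, Tm.sub p s = some (Tm.subst σ ρ.lhs) ∧ t = Tm.repl p s (Tm.subst σ ρ.rhs)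

/-- The rewrite relation of a TRS (set of rules). -/
def Step {F V : Type} (R : Set (Rule F V)) (s t : Tm F V) : Prop :=
  ∃ ρ ∈ R, ∃ p, StepAt p ρ s t

/-- `l` matches `t`: some substitution instance of `l` equals `t`. -/
def Matches {F V : Type} (l t : Tm F V) : Prop :=
  ∃ σ : V → Tm F V, Tm.subst σ l = t

/-- Reflexive-transitive closure of rewriting. -/
abbrev Steps {F V : Type} (R : Set (Rule F V)) : Tm F V → Tm F V → Prop :=
  Relation.ReflTransGen (Step R)

/-- Confluence on a set of terms. -/
def ConfluentOn {F V : Type} (R : Set (Rule F V)) (T : Set (Tm F V)) : Prop :=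
  ∀ s ∈ T, ∀ t u, Steps R s t → Steps R s u → ∃ v, Steps R t v ∧ Steps R u v

/-- Confluence (on all terms). -/
def Confluent {F V : Type} (R : Set (Rule F V)) : Prop :=
  ConfluentOn R Set.univ

/-- A relation is terminating if it admits no infinite sequences, i.e., its
inverse is well-founded. -/
def TerminatingRel {α : Type} (r : α → α → Prop) : Prop :=
  WellFounded (fun a b => r b a)

/-- One step of `A` relative to `B`: `→B* · →A · →B*`. -/
def RelStep {F V : Type} (A B : Set (Rule F V)) (s t : Tm F V) : Prop :=
  ∃ s' t', Steps B s s' ∧ Step A s' t' ∧ Steps B t' t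

/-- Relative termination of `A/B`. -/
def RelTerminating {F V : Type} (A B : Set (Rule F V)) : Prop :=
  TerminatingRel (RelStep A B)
/-- Contexts over `F` and `V`: terms over the signature extended with a
fresh hole constant (`Sum.inr ()`). -/
abbrev Ctx (F V : Type) := Tm (F ⊕ Unit) V

/-- The empty context (the hole). -/
def hole {F V : Type} : Ctx F V := Tm.app (Sum.inr ()) []

/-- A context with no holes, i.e., a term. -/
def noHole {F V : Type} (C : Ctx F V) : Prop :=
  ∀ p : List Nat, Tm.sub p C ≠ some (hole (F := F) (V := V))

/-- `p` is a position of `C` whose root is a function symbol (not a hole, not a variable). -/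
def funPos {F V : Type} (p : List Nat) (C : Ctx F V) : Prop :=
  ∃ (f : F) (ts : List (Ctx F V)), Tm.sub p C = some (Tm.app (Sum.inl f) ts)

/-- The partial order `⊑` on contexts: the smallest reflexive transitive
monotone relation with `hole ⊑ C` for every context `C`. -/
inductive CLe {F V : Type} : Ctx F V → Ctx F V → Prop
  | refl (C : Ctx F V) : CLe C C
  | hole (C : Ctx F V) : CLe hole C
  | trans {C D E : Ctx F V} : CLe C D → CLe D E → CLe C E
  | mono (f : F ⊕ Unit) {Cs Ds : List (Ctx F V)} :
      List.Forall₂ CLe Cs Ds → CLe (Tm.app f Cs) (Tm.app f Ds)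

/-- `M` is the merge (supremum w.r.t. `⊑`) of `C` and `D`. -/
def IsMerge {F V : Type} (C D M : Ctx F V) : Prop :=
  CLe C M ∧ CLe D M ∧ ∀ E, CLe C E → CLe D E → CLe M E

/-- `L` is a top of `C` according to `𝕃`. -/
def TopOf {F V : Type} (𝕃 : Set (Ctx F V)) (C L : Ctx F V) : Prop :=
  L ∈ 𝕃 ∧ CLe L C

/-- `M` is a max-top of `C` according to `𝕃`: a top maximal w.r.t. `⊑`. -/
def MaxTopOf {F V : Type} (𝕃 : Set (Ctx F V)) (C M : Ctx F V) : Prop :=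
  TopOf 𝕃 C M ∧ ∀ L, TopOf 𝕃 C L → CLe M L → L = M

/-- A layer system: a set of contexts satisfying (L1), (L2) and (L3). -/
structure LayerSystem {F V : Type} (𝕃 : Set (Ctx F V)) : Prop where
  /-- (L1): every term has a non-empty top. -/
  L1 : ∀ t : Ctx F V, noHole t → ∃ L, TopOf 𝕃 t L ∧ L ≠ hole
  /-- (L2): `C[x]_p ∈ 𝕃` iff `C[□]_p ∈ 𝕃`. -/
  L2 : ∀ (C : Ctx F V) (p : List Nat) (x : V), (Tm.sub p C).isSome →
        (Tm.repl p C (Tm.var x) ∈ 𝕃 ↔ Tm.repl p C hole ∈ 𝕃)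
  /-- (L3): layers are closed under merging at function positions. -/
  L3 : ∀ L ∈ 𝕃, ∀ N ∈ 𝕃, ∀ (p : List Nat) (Lp M : Ctx F V),
        funPos p L → Tm.sub p L = some Lp → IsMerge Lp N M → Tm.repl p L M ∈ 𝕃

/-- Condition (W): rewrite steps at function positions of the max-top can be
mirrored on the max-top, yielding a layer. -/
def CondW {F V : Type} (R : Set (Rule (F ⊕ Unit) V)) (𝕃 : Set (Ctx F V)) : Prop :=
  ∀ (s M : Ctx F V) (p : List Nat) (ρ : Rule (F ⊕ Unit) V) (t : Ctx F V),
    noHole s → MaxTopOf 𝕃 s M → funPos p M → ρ ∈ R → StepAt p ρ s t →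
    ∃ L ∈ 𝕃, StepAt p ρ M L

/-- Condition (C1): in (W), the resulting layer is the max-top of `t` or empty. -/
def CondC1 {F V : Type} (R : Set (Rule (F ⊕ Unit) V)) (𝕃 : Set (Ctx F V)) : Prop :=
  ∀ (s M : Ctx F V) (p : List Nat) (ρ : Rule (F ⊕ Unit) V) (t L : Ctx F V),
    noHole s → MaxTopOf 𝕃 s M → funPos p M → ρ ∈ R → StepAt p ρ s t →
    StepAt p ρ M L → L ∈ 𝕃 → (L = hole ∨ MaxTopOf 𝕃 t L)

/-- Condition (C2): if `L ⊑ N` are layers then filling a hole of `L` with the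
corresponding subcontext of `N` yields a layer. -/
def CondC2 {F V : Type} (𝕃 : Set (Ctx F V)) : Prop :=
  ∀ L ∈ 𝕃, ∀ N ∈ 𝕃, CLe L N → ∀ (p : List Nat) (Np : Ctx F V),
    Tm.sub p L = some (hole (F := F) (V := V)) → Tm.sub p N = some Np →
    Tm.repl p L Np ∈ 𝕃

/-- A TRS is weakly layered according to `𝕃` if (W) holds. -/
def WeaklyLayered {F V : Type} (R : Set (Rule (F ⊕ Unit) V)) (𝕃 : Set (Ctx F V)) : Prop :=
  CondW R 𝕃

/-- A TRS is layered according to `𝕃` if (W), (C1) and (C2) hold. -/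
def Layered {F V : Type} (R : Set (Rule (F ⊕ Unit) V)) (𝕃 : Set (Ctx F V)) : Prop :=
  CondW R 𝕃 ∧ CondC1 R 𝕃 ∧ CondC2 𝕃

/-- `HasRank 𝕃 t n`: the rank of `t` (according to the layer system `𝕃`) is `n`,
i.e., `n = 1 + max` of the ranks of the aliens of `t` (the subterms at the hole
positions of the max-top of `t`). -/
inductive HasRank {F V : Type} (𝕃 : Set (Ctx F V)) : Ctx F V → Nat → Prop
  | intro (t M : Ctx F V) (n : Nat) (rk : List Nat → Nat) :
      MaxTopOf 𝕃 t M →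
      (∀ (p : List Nat) (tp : Ctx F V), Tm.sub p M = some hole → Tm.sub p t = some tp →
        HasRank 𝕃 tp (rk p)) →
      (∀ p : List Nat, Tm.sub p M = some hole → rk p ≤ n) →
      (n = 0 ∨ ∃ (p : List Nat) (tp : Ctx F V), Tm.sub p M = some hole ∧
        Tm.sub p t = some tp ∧ rk p = n) →
      HasRank 𝕃 t (n + 1)

/-!
Name each hole of `C` by a fresh variable indexed by its position, and each hole of `σ x` by a
fresh variable indexed by `(x, position)`; at `p` put back `ℓ` instantiated with these renamed
`σ x` (naming the holes of `C|_p = ℓσ` directly would break the sharing of a non-linear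
`ℓ`). Sending the fresh variables to `□` gives back `C`. If `C ⊑ D` and `D|_p = ℓμ`, then
`ℓσ ⊑ ℓμ`, and since `ℓ` has no holes this forces `σ x ⊑ μ x`; sending each fresh
variable to the subterm of `D`, resp. `μ x`, at its position then yields `D`.
-/

namespace Tm

variable {F V : Type}

@[induction_eliminator]
theorem induction {motive : Tm F V → Prop} (var : ∀ x, motive (var x))
    (app : ∀ f ts, (∀ t ∈ ts, motive t) → motive (app f ts)) : ∀ t, motive t
  | .var x => var x
  | .app f ts => app f ts fun t _ => induction var app t
  decreasing_by simp only [Tm.app.sizeOf_spec]; have := List.sizeOf_lt_of_mem ‹_›; omega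

@[simp] theorem subst_var (σ : V → Tm F V) (x : V) : subst σ (var x) = σ x := by
  rw [subst]

@[simp] theorem subst_app (σ : V → Tm F V) (f : F) (ts : List (Tm F V)) :
    subst σ (app f ts) = app f (ts.map (subst σ)) := by
  simp [subst]

@[simp] theorem vars_var (x : V) : vars (F := F) (var x) = [x] := by
  rw [vars]

@[simp] theorem vars_app (f : F) (ts : List (Tm F V)) :
    vars (app f ts) = ts.flatMap vars := by
  simp [vars]

theorem subst_subst (θ τ : V → Tm F V) (t : Tm F V) :
    subst θ (subst τ t) = subst (fun x => subst θ (τ x)) t := by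
  induction t with
  | var x => simp
  | app f ts ih => simpa using List.map_congr_left ih

theorem subst_congr {θ τ : V → Tm F V} {t : Tm F V} (h : ∀ x ∈ vars t, θ x = τ x) :
    subst θ t = subst τ t := by
  induction t with
  | var x => simpa using h
  | app f ts ih =>
    simp only [vars_app, List.mem_flatMap] at h
    simpa using List.map_congr_left fun t ht => ih t ht fun x hx => h x ⟨t, ht, hx⟩

theorem vars_subst (σ : V → Tm F V) (t : Tm F V) :
    vars (subst σ t) = (vars t).flatMap fun x => vars (σ x) := by
  induction t with
  | var x => simp
  | app f ts ih =>
    simpa [List.flatMap_map, List.flatMap_assoc] using List.flatMap_congr ih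

theorem sub_cons_eq_some {i : ℕ} {p : List ℕ} {t u : Tm F V} :
    sub (i :: p) t = some u ↔
      ∃ f ts a, t = app f ts ∧ ts[i]? = some a ∧ sub p a = some u := by
  cases t <;> simp [sub, Option.bind_eq_some_iff]

theorem vars_subset_of_sub {p : List ℕ} {t u : Tm F V} (hs : sub p t = some u) :
    vars u ⊆ vars t := by
  induction p generalizing t with
  | nil => simp_all [sub]
  | cons i p ih =>
    obtain ⟨f, ts, a, rfl, ha, hs⟩ := sub_cons_eq_some.1 hs
    intro x hx
    simpa using ⟨a, List.mem_of_getElem? ha, ih hs hx⟩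

theorem repl_eq_self {p : List ℕ} {t u : Tm F V} (hs : sub p t = some u) : repl p t u = t := by
  induction p generalizing t with
  | nil => simp_all [sub, repl]
  | cons i p ih =>
    obtain ⟨f, ts, a, rfl, ha, hs⟩ := sub_cons_eq_some.1 hs
    obtain ⟨hi, rfl⟩ := List.getElem?_eq_some_iff.1 ha
    simp [repl, ha, ih hs]

theorem sub_repl {p : List ℕ} {t u : Tm F V} (v : Tm F V) (hs : sub p t = some u) :
    sub p (repl p t v) = some v := by
  induction p generalizing t with
  | nil => simp [sub, repl]
  | cons i p ih =>
    obtain ⟨f, ts, a, rfl, ha, hs⟩ := sub_cons_eq_some.1 hs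
    obtain ⟨hi, rfl⟩ := List.getElem?_eq_some_iff.1 ha
    simp [repl, sub, ha, List.getElem?_set_self hi, ih hs]

theorem subst_repl {p : List ℕ} {t u : Tm F V} (σ : V → Tm F V) (v : Tm F V)
    (hs : sub p t = some u) : subst σ (repl p t v) = repl p (subst σ t) (subst σ v) := by
  induction p generalizing t with
  | nil => simp [repl]
  | cons i p ih =>
    obtain ⟨f, ts, a, rfl, ha, hs⟩ := sub_cons_eq_some.1 hs
    obtain ⟨hi, rfl⟩ := List.getElem?_eq_some_iff.1 ha
    simp [repl, ha, ih hs, List.map_set]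

end Tm

section HoleFree

variable {F V : Type}

theorem Tm.app_eq_hole {f : F ⊕ Unit} {ts : List (Ctx F V)} :
    Tm.app f ts = hole ↔ f = Sum.inr () ∧ ts = [] := by
  simp [hole]

inductive HoleFree : Ctx F V → Prop
  | var (x : V) : HoleFree (.var x)
  | app {f : F ⊕ Unit} {ts : List (Ctx F V)} :
      Tm.app f ts ≠ hole → (∀ t ∈ ts, HoleFree t) → HoleFree (.app f ts)

theorem HoleFree.sub {p : List ℕ} {t u : Ctx F V} (ht : HoleFree t) (hs : Tm.sub p t = some u) :
    HoleFree u := by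
  induction p generalizing t with
  | nil => simp_all [Tm.sub]
  | cons i p ih =>
    obtain ⟨f, ts, a, rfl, ha, hs⟩ := Tm.sub_cons_eq_some.1 hs
    cases ht with
    | app _ hts => exact ih (hts a (List.mem_of_getElem? ha)) hs

theorem holeFree_iff_noHole {t : Ctx F V} : HoleFree t ↔ noHole t := by
  refine ⟨fun ht p hp => ?_, fun ht => ?_⟩
  · cases ht.sub hp with
    | app hne _ => exact hne rfl
  induction t using Tm.induction with
  | var x => exact .var x
  | app f ts ih =>
    refine .app (fun h => ht [] (by rw [Tm.sub, h])) fun t hmem => ih t hmem fun q hq => ?_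
    obtain ⟨i, hi, rfl⟩ := List.getElem_of_mem hmem
    exact ht (i :: q) (Tm.sub_cons_eq_some.2 ⟨f, ts, _, rfl, List.getElem?_eq_getElem hi, hq⟩)

theorem HoleFree.subst {σ : V → Ctx F V} {t : Ctx F V} (ht : HoleFree t)
    (hσ : ∀ x, HoleFree (σ x)) : HoleFree (Tm.subst σ t) := by
  induction ht with
  | var x => simpa using hσ x
  | app hne _ ih =>
    rw [Tm.subst_app]
    refine .app ?_ ?_
    · simp_all [Tm.app_eq_hole]
    · simpa using ih

theorem HoleFree.repl {p : List ℕ} {t u : Ctx F V} (ht : HoleFree t) (hu : HoleFree u) :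
    HoleFree (Tm.repl p t u) := by
  induction p generalizing t with
  | nil => simpa [Tm.repl] using hu
  | cons i p ih =>
    cases ht with
    | var x => exact .var x
    | @app f ts hne hts =>
      rw [Tm.repl]
      split
      · refine .app ?_ fun s hs => ?_
        · simp_all [Tm.app_eq_hole]
        rcases List.mem_or_eq_of_mem_set hs with hs | rfl
        · exact hts s hs
        · exact ih (hts _ (List.mem_of_getElem? ‹_›))
      · exact .app hne hts

end HoleFree

namespace CLe

variable {F V : Type}

theorem eq_hole_or_eq_or_app {A B : Ctx F V} (h : CLe A B) :
    A = _root_.hole ∨ A = B ∨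
      ∃ f ts Bs, A = .app f ts ∧ B = .app f Bs ∧ List.Forall₂ CLe ts Bs := by
  refine CLe.rec (motive_1 := fun A B _ => A = _root_.hole ∨ A = B ∨
      ∃ f ts Bs, A = .app f ts ∧ B = .app f Bs ∧ List.Forall₂ CLe ts Bs)
    (motive_2 := fun _ _ _ => True) (fun _ => .inr (.inl rfl)) (fun _ => .inl rfl) ?_
    (fun f Cs Ds h _ => .inr (.inr ⟨f, Cs, Ds, rfl, rfl, h⟩)) trivial (fun _ _ _ _ => trivial) h
  rintro A B E - - (hA | rfl | ⟨f, ts, Bs, rfl, rfl, hf⟩) hBE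
  · exact .inl hA
  · exact hBE
  · rcases hBE with hB | rfl | ⟨g, Bs', Es, hB, rfl, hg⟩
    · obtain ⟨rfl, rfl⟩ := Tm.app_eq_hole.1 hB
      cases hf
      exact .inl rfl
    · exact .inr (.inr ⟨f, ts, Bs, rfl, rfl, hf⟩)
    · obtain ⟨rfl, rfl⟩ := Tm.app.inj hB
      have hlen := hg.length_eq
      refine .inr (.inr ⟨f, ts, Es, rfl, rfl, List.forall₂_iff_get.2
        ⟨hf.length_eq.trans hlen, fun i hi hi' => ?_⟩⟩)
      exact (hf.get hi (hlen ▸ hi')).trans (hg.get _ hi')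

theorem var_left {x : V} {B : Ctx F V} (h : CLe (.var x) B) : B = .var x := by
  rcases h.eq_hole_or_eq_or_app with h | h | ⟨_, _, _, h, -⟩
  · cases h
  · exact h.symm
  · cases h

theorem app_left {f : F ⊕ Unit} {ts : List (Ctx F V)} {B : Ctx F V} (h : CLe (.app f ts) B) :
    Tm.app f ts = _root_.hole ∨ ∃ Bs, B = .app f Bs ∧ List.Forall₂ CLe ts Bs := by
  rcases h.eq_hole_or_eq_or_app with h | rfl | ⟨g, ts', Bs, hA, rfl, hf⟩
  · exact .inl h
  · exact .inr ⟨ts, rfl, List.forall₂_same.2 fun t _ => CLe.refl t⟩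
  · obtain ⟨rfl, rfl⟩ := Tm.app.inj hA
    exact .inr ⟨Bs, rfl, hf⟩

theorem exists_sub {p : List ℕ} {C D Cp : Ctx F V} (h : CLe C D) (hp : Tm.sub p C = some Cp) :
    ∃ Dp, Tm.sub p D = some Dp ∧ CLe Cp Dp := by
  induction p generalizing C D with
  | nil => simp_all [Tm.sub]
  | cons i p ih =>
    obtain ⟨f, ts, a, rfl, ha, hp⟩ := Tm.sub_cons_eq_some.1 hp
    obtain ⟨hi, rfl⟩ := List.getElem?_eq_some_iff.1 ha
    rcases h.app_left with h | ⟨Bs, rfl, hf⟩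
    · obtain ⟨-, rfl⟩ := Tm.app_eq_hole.1 h
      simp at hi
    have hi' : i < Bs.length := hf.length_eq ▸ hi
    obtain ⟨Dp, hDp, hle⟩ := ih (by simpa using hf.get hi hi') hp
    refine ⟨Dp, Tm.sub_cons_eq_some.2 ⟨f, Bs, _, rfl, ?_, hDp⟩, hle⟩
    exact List.getElem?_eq_getElem hi'

theorem of_subst {σ τ : V → Ctx F V} {t : Ctx F V} (ht : HoleFree t)
    (h : CLe (Tm.subst σ t) (Tm.subst τ t)) : ∀ x ∈ Tm.vars t, CLe (σ x) (τ x) := by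
  induction ht with
  | var y => simpa using h
  | @app f ts hne _ ih =>
    rw [Tm.subst_app, Tm.subst_app] at h
    rcases h.app_left with h | ⟨Bs, hB, hf⟩
    · simp_all [Tm.app_eq_hole]
    obtain ⟨-, rfl⟩ := Tm.app.inj hB
    simp only [List.forall₂_map_left_iff, List.forall₂_map_right_iff] at hf
    simp only [Tm.vars_app, List.mem_flatMap, forall_exists_index, and_imp]
    intro x t ht hx
    obtain ⟨i, hi, rfl⟩ := List.getElem_of_mem ht
    exact ih _ ht (hf.get hi hi) x hx

end CLe

namespace Tm

variable {F V : Type}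

def nameHoles (h : List ℕ → V) : Ctx F V → Ctx F V
  | .var x => .var x
  | .app (Sum.inr ()) [] => .var (h [])
  | .app f ts => .app f (ts.attach.mapIdx fun i t => nameHoles (fun q => h (i :: q)) t.1)
  decreasing_by simp only [Tm.app.sizeOf_spec]; have := List.sizeOf_lt_of_mem t.2; omega

@[simp] theorem nameHoles_var (h : List ℕ → V) (x : V) :
    nameHoles (F := F) h (.var x) = .var x := by
  rw [nameHoles]

@[simp] theorem nameHoles_hole (h : List ℕ → V) : nameHoles (F := F) h hole = .var (h []) := by
  rw [hole, nameHoles]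

theorem nameHoles_app (h : List ℕ → V) {f : F ⊕ Unit} {ts : List (Ctx F V)}
    (hne : app f ts ≠ hole) :
    nameHoles h (.app f ts) = .app f (ts.mapIdx fun i t => nameHoles (fun q => h (i :: q)) t) := by
  have attach_mapIdx : (ts.attach.mapIdx fun i t => nameHoles (fun q => h (i :: q)) t.1) =
      ts.mapIdx fun i t => nameHoles (fun q => h (i :: q)) t := by
    refine List.ext_getElem? fun i => ?_
    simp only [List.getElem?_mapIdx, List.getElem?_attach, Option.map_pmap]
    exact Option.pmap_eq_map _ _ _ _
  rw [← attach_mapIdx]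
  match f, ts, hne with
  | Sum.inl _, _, _ => rw [nameHoles]; simp
  | Sum.inr (), [], hne => exact absurd rfl hne
  | Sum.inr (), _ :: _, _ => rw [nameHoles]; simp

theorem holeFree_nameHoles (h : List ℕ → V) (A : Ctx F V) : HoleFree (nameHoles h A) := by
  induction A using Tm.induction generalizing h with
  | var x => simpa using .var x
  | app f ts ih =>
    by_cases hne : app f ts = hole
    · rw [hne, nameHoles_hole]
      exact .var _
    rw [nameHoles_app h hne]
    refine .app (by simpa [app_eq_hole] using hne) fun t ht => ?_
    obtain ⟨i, hi, rfl⟩ := List.getElem_of_mem ht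
    simpa using ih _ (List.getElem_mem (by simpa using hi)) _

theorem sub_nameHoles (h : List ℕ → V) {p : List ℕ} {C Cp : Ctx F V}
    (hp : sub p C = some Cp) :
    sub p (nameHoles h C) = some (nameHoles (fun q => h (p ++ q)) Cp) := by
  induction p generalizing C h with
  | nil => simp_all [sub]
  | cons i p ih =>
    obtain ⟨f, ts, a, rfl, ha, hp⟩ := sub_cons_eq_some.1 hp
    have hne : app f ts ≠ hole := by
      rintro ⟨-, rfl⟩
      simp at ha
    rw [nameHoles_app h hne, sub, List.getElem?_mapIdx, ha, Option.map_some, Option.bind_some]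
    exact ih _ hp

theorem subst_nameHoles_of_cle (θ : V → Ctx F V) (h : List ℕ → V) {A B : Ctx F V}
    (hle : CLe A B)
    (hhole : ∀ q Bq, sub q A = some hole → sub q B = some Bq → θ (h q) = Bq)
    (hvars : ∀ y ∈ vars A, θ y = var y) : subst θ (nameHoles h A) = B := by
  induction A using Tm.induction generalizing B h with
  | var x => simpa [hle.var_left] using hvars
  | app f ts ih =>
    by_cases hne : app f ts = hole
    · rw [hne, nameHoles_hole, subst_var]
      exact hhole [] B (by rw [sub, hne]) rfl
    rcases hle.app_left with h' | ⟨Bs, rfl, hf⟩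
    · exact absurd h' hne
    rw [nameHoles_app h hne, subst_app]
    congr 1
    refine List.ext_getElem (by simp [hf.length_eq]) fun i hi hi' => ?_
    simp only [List.length_map, List.length_mapIdx] at hi
    simp only [List.getElem_map, List.getElem_mapIdx]
    refine ih _ (List.getElem_mem hi) _ (by simpa using hf.get hi (hf.length_eq ▸ hi))
      (fun q Bq hq hBq => hhole (i :: q) Bq ?_ ?_) fun y hy => hvars y ?_
    · exact sub_cons_eq_some.2 ⟨f, ts, _, rfl, List.getElem?_eq_getElem hi, hq⟩
    · exact sub_cons_eq_some.2 ⟨f, Bs, _, rfl, List.getElem?_eq_getElem _, hBq⟩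
    · simpa using ⟨_, List.getElem_mem hi, hy⟩

end Tm

theorem exists_injective_forall_notMem (α : Type) {V : Type} [Countable α] [Infinite V]
    (S : List V) : ∃ g : α → V, Function.Injective g ∧ ∀ a, g a ∉ S := by
  obtain ⟨j, hj⟩ := exists_injective_nat α
  let e := S.finite_toSet.infinite_compl.natEmbedding
  exact ⟨fun a => e (j a), Subtype.val_injective.comp (e.injective.comp hj),
    fun a => (e (j a)).2⟩

section NameHolesAt

variable {F V : Type} (g : List ℕ ⊕ V × List ℕ → V)

def nameHolesAt (p : List ℕ) (ℓ : Ctx F V) (σ : V → Ctx F V) (C : Ctx F V) : Ctx F V :=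
  Tm.repl p (Tm.nameHoles (fun q => g (.inl q)) C)
    (ℓ.subst fun x => Tm.nameHoles (fun r => g (.inr (x, r))) (σ x))

variable {p : List ℕ} {ℓ : Ctx F V} {σ : V → Ctx F V} {C : Ctx F V}

theorem holeFree_nameHolesAt (hℓ : HoleFree ℓ) : HoleFree (nameHolesAt g p ℓ σ C) :=
  (Tm.holeFree_nameHoles _ C).repl (hℓ.subst fun _ => Tm.holeFree_nameHoles _ _)

theorem sub_nameHolesAt {Cp : Ctx F V} (hp : C.sub p = some Cp) :
    (nameHolesAt g p ℓ σ C).sub p =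
      some (ℓ.subst fun x => Tm.nameHoles (fun r => g (.inr (x, r))) (σ x)) :=
  Tm.sub_repl _ (Tm.sub_nameHoles _ hp)

theorem subst_nameHolesAt {D : Ctx F V} {μ θ : V → Ctx F V} (hℓ : HoleFree ℓ)
    (hCD : CLe C D) (hC : C.sub p = some (ℓ.subst σ)) (hD : D.sub p = some (ℓ.subst μ))
    (hθC : ∀ q B, C.sub q = some hole → D.sub q = some B → θ (g (.inl q)) = B)
    (hθσ : ∀ x r B, (σ x).sub r = some hole → (μ x).sub r = some B →
      θ (g (.inr (x, r))) = B)
    (hθvars : ∀ y ∈ C.vars, θ y = .var y) :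
    (nameHolesAt g p ℓ σ C).subst θ = D := by
  obtain ⟨Dp, hDp, hle⟩ := hCD.exists_sub hC
  obtain rfl : Dp = ℓ.subst μ := Option.some_injective _ (hDp.symm.trans hD)
  have hσμ := CLe.of_subst hℓ hle
  rw [nameHolesAt, Tm.subst_repl _ _ (Tm.sub_nameHoles _ hC),
    Tm.subst_nameHoles_of_cle θ _ hCD hθC hθvars, Tm.subst_subst,
    Tm.subst_congr (τ := μ) fun x hx => ?_, Tm.repl_eq_self hD]
  refine Tm.subst_nameHoles_of_cle θ _ (hσμ x hx) (hθσ x) fun y hy => hθvars y ?_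
  exact Tm.vars_subset_of_sub hC (by simpa [Tm.vars_subst] using ⟨x, hx, hy⟩)

theorem subst_extend_nameHolesAt (hg : Function.Injective g) (hfresh : ∀ a, g a ∉ C.vars)
    (hℓ : HoleFree ℓ) {D : Ctx F V} {μ : V → Ctx F V}
    {φ : List ℕ ⊕ V × List ℕ → Ctx F V}
    (hCD : CLe C D) (hC : C.sub p = some (ℓ.subst σ)) (hD : D.sub p = some (ℓ.subst μ))
    (hφC : ∀ q B, C.sub q = some hole → D.sub q = some B → φ (.inl q) = B)
    (hφσ : ∀ x r B, (σ x).sub r = some hole → (μ x).sub r = some B →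
      φ (.inr (x, r)) = B) :
    (nameHolesAt g p ℓ σ C).subst (Function.extend g φ Tm.var) = D := by
  refine subst_nameHolesAt g hℓ hCD hC hD (by simpa [hg.extend_apply] using hφC)
    (by simpa [hg.extend_apply] using hφσ) fun y hy => ?_
  exact Function.extend_apply' _ _ _ fun ⟨a, ha⟩ => hfresh a (ha ▸ hy)

end NameHolesAt

theorem context_instance_general (F V : Type) [Countable V] [Infinite V]
    (C : Ctx F V) (p : List Nat) (ℓ Cp : Ctx F V)
    (hℓterm : noHole ℓ)
    (hp : Tm.sub p C = some Cp) (hm : Matches ℓ Cp) :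
    ∃ c : Ctx F V, noHole c ∧
      (∃ cp : Ctx F V, Tm.sub p c = some cp ∧ Matches ℓ cp) ∧
      (∃ σ : V → Ctx F V, (∀ x : V, σ x = hole ∨ σ x = Tm.var x) ∧ Tm.subst σ c = C) ∧
      (∀ D Dp : Ctx F V, CLe C D → Tm.sub p D = some Dp → Matches ℓ Dp → Matches c D) := by
  obtain ⟨σ, rfl⟩ := hm
  have hℓ := holeFree_iff_noHole.2 hℓterm
  obtain ⟨g, hg, hfresh⟩ := exists_injective_forall_notMem (List ℕ ⊕ V × List ℕ) C.vars
  refine ⟨nameHolesAt g p ℓ σ C, holeFree_iff_noHole.1 (holeFree_nameHolesAt g hℓ),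
    ⟨_, sub_nameHolesAt g hp, _, rfl⟩,
    ⟨Function.extend g (fun _ => hole) Tm.var, ?_, ?_⟩, ?_⟩
  · intro x
    by_cases hx : ∃ a, g a = x
    · obtain ⟨a, rfl⟩ := hx
      exact .inl (hg.extend_apply _ _ a)
    · exact .inr (Function.extend_apply' _ _ _ hx)
  · exact subst_extend_nameHolesAt g hg hfresh hℓ (.refl C) hp hp
      (fun _ _ h h' => Option.some_injective _ (h.symm.trans h'))
      fun _ _ _ h h' => Option.some_injective _ (h.symm.trans h')
  · rintro D Dp hCD hpD ⟨μ, rfl⟩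
    exact ⟨_, subst_extend_nameHolesAt g hg hfresh hℓ hCD hp hpD
      (φ := Sum.elim (fun q => (D.sub q).getD hole) fun (x, r) => ((μ x).sub r).getD hole)
      (by simp_all) (by simp_all)⟩

/-- if a non-variable term `ℓ` matches the subterm of a context `C`
at position `p`, then there is a term `c` such that (1) `ℓ` matches `c|_p` and
`C = c σ_□` for a substitution mapping each variable to itself or to the hole,
and (2) `c` matches every context `D ⊒ C` with `ℓ` matching `D|_p`. -/
theorem context_instance (F V : Type) [Countable V] [Infinite V]
    (C : Ctx F V) (p : List Nat) (ℓ Cp : Ctx F V)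
    (hℓterm : noHole ℓ) (hℓvar : ∀ x : V, ℓ ≠ Tm.var x)
    (hp : Tm.sub p C = some Cp) (hm : Matches ℓ Cp) :
    ∃ c : Ctx F V, noHole c ∧
      (∃ cp : Ctx F V, Tm.sub p c = some cp ∧ Matches ℓ cp) ∧
      (∃ σ : V → Ctx F V, (∀ x : V, σ x = hole ∨ σ x = Tm.var x) ∧ Tm.subst σ c = C) ∧
      (∀ D Dp : Ctx F V, CLe C D → Tm.sub p D = some Dp → Matches ℓ Dp → Matches c D) :=
  context_instance_general F V C p ℓ Cp hℓterm hp hm
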